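/- Let n₁, m₁, n₂, m₂ ∈ ℕ, and let f ∈ L²(ℝ₊^{n₁+m₁}) and g ∈ L²(ℝ₊^{n₂+m₂}) be fully symmetric functions. Then for natural numbers p ≤ n₁ ∧ n₂ and r ≤ m₁ ∧ m₂, the bicontraction satisfies ‖f ⌢_{p,r} g‖²_{L²(ℝ₊^{n₁+n₂−2p}) ⊗ L²(ℝ₊^{m₁+m₂−2r})} = ‖f ⌢_{p+r} g‖²_{L²(ℝ₊^{n₁+n₂+m₁+m₂−2p−2r})}, where ⌢_{p+r} denotes the (p+r)-th nested contraction of f and g viewed as functions of n₁+m₁ and n₂+m₂ variables respectively. -/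

import Mathlib

open MeasureTheory Complex Filter

noncomputable section

/-- Lebesgue measure restricted to the nonnegative orthant of `ℝⁿ`. -/
def orth (n : ℕ) : Measure (Fin n → ℝ) :=
  volume.restrict {x | ∀ i, 0 ≤ x i}

/-- The `p`-th nested contraction of `f ∈ L²(ℝ₊ⁿ)` and `g ∈ L²(ℝ₊ᵐ)`:
`(f ⌢ₚ g)(t₁,…,t_{n+m−2p}) = ∫ f(t₁,…,t_{n−p},s_p,…,s₁) g(s₁,…,s_p,t_{n−p+1},…) ds`. -/
def contr {n m : ℕ} (p : ℕ) (hn : p ≤ n) (hm : p ≤ m)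
    (f : (Fin n → ℝ) → ℂ) (g : (Fin m → ℝ) → ℂ)
    (t : Fin (n + m - 2*p) → ℝ) : ℂ :=
  ∫ s : Fin p → ℝ,
      f (fun i => if h1 : (i : ℕ) < n - p then t ⟨i, by omega⟩
          else s (Fin.rev ⟨(i : ℕ) - (n - p), by have := i.isLt; omega⟩))
    * g (fun i => if h1 : (i : ℕ) < p then s ⟨i, h1⟩
          else t ⟨n - p + ((i : ℕ) - p), by have := i.isLt; omega⟩)
    ∂(orth p)

/-- The `r`-th star contraction `f ⋆ᵣ^{r−1} g`, integrating `r−1` middle variables and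
identifying one further (shared, non-integrated) variable. -/
def starContr {n m : ℕ} (r : ℕ) (hr : 1 ≤ r) (hn : r ≤ n) (hm : r ≤ m)
    (f : (Fin n → ℝ) → ℂ) (g : (Fin m → ℝ) → ℂ)
    (t : Fin (n + m - 2*r + 1) → ℝ) : ℂ :=
  ∫ s : Fin (r - 1) → ℝ,
      f (fun i => if h1 : (i : ℕ) < n - r + 1 then t ⟨i, by omega⟩
          else s (Fin.rev ⟨(i : ℕ) - (n - r + 1), by have := i.isLt; omega⟩))
    * g (fun i => if h1 : (i : ℕ) < r - 1 then s ⟨i, h1⟩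
          else t ⟨n - r + ((i : ℕ) - (r - 1)), by have := i.isLt; omega⟩)
    ∂(orth (r - 1))

/-- The `(p,r)`-bicontraction of `f ∈ L²(ℝ₊^{n₁}) ⊗ L²(ℝ₊^{m₁})` and
`g ∈ L²(ℝ₊^{n₂}) ⊗ L²(ℝ₊^{m₂})`, flattened to a function of
`n₁+n₂+m₁+m₂−2p−2r` variables. -/
def bicontr {n₁ m₁ n₂ m₂ : ℕ} (p r : ℕ)
    (hp₁ : p ≤ n₁) (hp₂ : p ≤ n₂) (hr₁ : r ≤ m₁) (hr₂ : r ≤ m₂)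
    (f : (Fin (n₁ + m₁) → ℝ) → ℂ) (g : (Fin (n₂ + m₂) → ℝ) → ℂ)
    (t : Fin (n₁ + n₂ + m₁ + m₂ - 2*p - 2*r) → ℝ) : ℂ :=
  ∫ sy : (Fin p → ℝ) × (Fin r → ℝ),
      f (fun i =>
          if h1 : (i : ℕ) < n₁ - p then t ⟨i, by have := i.isLt; omega⟩
          else if h2 : (i : ℕ) < n₁ then sy.1 (Fin.rev ⟨(i : ℕ) - (n₁ - p), by omega⟩)
          else if h3 : (i : ℕ) < n₁ + r then sy.2 ⟨(i : ℕ) - n₁, by omega⟩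
          else t ⟨(n₁ - p) + (n₂ - p) + (m₂ - r) + ((i : ℕ) - (n₁ + r)),
            by have := i.isLt; omega⟩)
    * g (fun i =>
          if h1 : (i : ℕ) < p then sy.1 ⟨i, h1⟩
          else if h2 : (i : ℕ) < n₂ then t ⟨(n₁ - p) + ((i : ℕ) - p), by omega⟩
          else if h3 : (i : ℕ) < n₂ + m₂ - r then
            t ⟨(n₁ - p) + (n₂ - p) + ((i : ℕ) - n₂), by omega⟩
          else sy.2 (Fin.rev ⟨(i : ℕ) - (n₂ + m₂ - r), by have := i.isLt; omega⟩))
    ∂((orth p).prod (orth r))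

/-- A function is mirror-symmetric if `f(t₁,…,tₙ) = conj (f(tₙ,…,t₁))` a.e. -/
def MirrorSym {n : ℕ} (f : (Fin n → ℝ) → ℂ) : Prop :=
  ∀ᵐ t ∂(orth n), f t = starRingEnd ℂ (f fun i => t i.rev)

/-- A function is (fully) symmetric if it is real-valued and invariant under all
permutations of its arguments. -/
def FullSym {n : ℕ} (f : (Fin n → ℝ) → ℂ) : Prop :=
  (∀ t, (f t).im = 0) ∧ ∀ σ : Equiv.Perm (Fin n), ∀ t, (f fun i => t (σ i)) = f t

/-! Writing the integration variables `(s, y)` of the bicontraction as one vector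
`u ∈ ℝ₊^{p+r}`, the arguments of `f` and of `g` in its integrand are permutations of those in
the integrand of the `(p+r)`-th nested contraction, evaluated at a permutation of the free
variables. Full symmetry absorbs the first two permutations, and the last one preserves Lebesgue
measure on the orthant. -/

theorem orth_eq_pi (n : ℕ) :
    orth n = Measure.pi fun _ => volume.restrict (Set.Ici (0 : ℝ)) := by
  rw [orth, ← Measure.restrict_pi_pi, volume_pi]
  congr 1
  ext x
  simp [Pi.le_def]

theorem integral_orth_comp_equiv {E : Type*} [NormedAddCommGroup E] [NormedSpace ℝ E]
    {n m : ℕ} (e : Fin n ≃ Fin m) (F : (Fin n → ℝ) → E) :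
    ∫ t, F (t ∘ e) ∂orth m = ∫ x, F x ∂orth n := by
  simp only [orth_eq_pi]
  exact (measurePreserving_piCongrLeft (fun _ => volume.restrict (Set.Ici (0 : ℝ))) e).symm
    |>.integral_comp' F

theorem integral_orth_prod {E : Type*} [NormedAddCommGroup E] [NormedSpace ℝ E]
    (p r : ℕ) (F : (Fin p → ℝ) × (Fin r → ℝ) → E) :
    ∫ x, F x ∂(orth p).prod (orth r) =
      ∫ u, F (fun i => u (Fin.castAdd r i), fun j => u (Fin.natAdd p j)) ∂orth (p + r) := by
  simp only [orth_eq_pi]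
  have h := (measurePreserving_piCongrLeft (fun _ => volume.restrict (Set.Ici (0 : ℝ)))
    finSumFinEquiv).symm.trans
    (measurePreserving_sumPiEquivProdPi fun _ : Fin p ⊕ Fin r => volume.restrict (Set.Ici (0 : ℝ)))
  exact (h.integral_comp' F).symm

theorem FullSym.apply_eq_of_injective {n : ℕ} {f : (Fin n → ℝ) → ℂ} (hf : FullSym f)
    {φ : Fin n → Fin n} (hφ : φ.Injective) {x y : Fin n → ℝ} (h : ∀ i, x i = y (φ i)) :
    f x = f y := by
  rw [← hf.2 (Equiv.ofBijective φ hφ.bijective_of_finite) y]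
  exact congrArg f (funext h)

section Bicontraction

variable {n₁ m₁ n₂ m₂ p r : ℕ}

/- `bicontrLeftIdx i` is the slot of `f`'s argument in `contr (p + r)` holding the variable that
sits in slot `i` of `f`'s argument in `bicontr p r`; `bicontrRightIdx` does the same for `g`, and
`bicontrOuterIdx` sends the free variables of `contr (p + r)` to those of `bicontr p r`. -/

def bicontrLeftIdx (n₁ m₁ p r : ℕ) (i : Fin (n₁ + m₁)) : Fin (n₁ + m₁) :=
  ⟨if i < n₁ - p then i
    else if i < n₁ then i + m₁
    else if i < n₁ + r then n₁ + m₁ - 1 - p - (i - n₁)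
    else i - (p + r), by split_ifs <;> omega⟩

theorem bicontrLeftIdx_injective (hp₁ : p ≤ n₁) (hr₁ : r ≤ m₁) :
    (bicontrLeftIdx n₁ m₁ p r).Injective := by
  intro i j h
  simp only [bicontrLeftIdx, Fin.ext_iff] at h ⊢
  split_ifs at h <;> omega

def bicontrRightIdx (n₂ m₂ p r : ℕ) (i : Fin (n₂ + m₂)) : Fin (n₂ + m₂) :=
  ⟨if i < p then i
    else if i < n₂ + m₂ - r then i + r
    else n₂ + m₂ + p - 1 - i, by split_ifs <;> omega⟩

theorem bicontrRightIdx_injective (hr₂ : r ≤ m₂) : (bicontrRightIdx n₂ m₂ p r).Injective := by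
  intro i j h
  simp only [bicontrRightIdx, Fin.ext_iff] at h ⊢
  split_ifs at h <;> omega

def bicontrOuterIdx (hp₁ : p ≤ n₁) (hp₂ : p ≤ n₂) (hr₁ : r ≤ m₁) (hr₂ : r ≤ m₂)
    (j : Fin ((n₁ + m₁) + (n₂ + m₂) - 2 * (p + r))) :
    Fin (n₁ + n₂ + m₁ + m₂ - 2 * p - 2 * r) :=
  ⟨if j < n₁ - p then j
    else if j < n₁ + m₁ - (p + r) then (n₁ - p) + (n₂ - p) + (m₂ - r) + (j - (n₁ - p))
    else j - (m₁ - r), by split_ifs <;> omega⟩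

theorem bicontrOuterIdx_bijective (hp₁ : p ≤ n₁) (hp₂ : p ≤ n₂) (hr₁ : r ≤ m₁) (hr₂ : r ≤ m₂) :
    (bicontrOuterIdx hp₁ hp₂ hr₁ hr₂).Bijective := by
  refine (Fintype.bijective_iff_injective_and_card _).2 ⟨fun i j h => ?_, by simp; omega⟩
  simp only [bicontrOuterIdx, Fin.ext_iff] at h ⊢
  split_ifs at h <;> omega

theorem bicontr_eq_contr_comp (hp₁ : p ≤ n₁) (hp₂ : p ≤ n₂) (hr₁ : r ≤ m₁) (hr₂ : r ≤ m₂)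
    {f : (Fin (n₁ + m₁) → ℝ) → ℂ} {g : (Fin (n₂ + m₂) → ℝ) → ℂ}
    (hfs : FullSym f) (hgs : FullSym g) (t : Fin (n₁ + n₂ + m₁ + m₂ - 2 * p - 2 * r) → ℝ) :
    bicontr p r hp₁ hp₂ hr₁ hr₂ f g t =
      contr (p + r) (Nat.add_le_add hp₁ hr₁) (Nat.add_le_add hp₂ hr₂) f g
        (t ∘ bicontrOuterIdx hp₁ hp₂ hr₁ hr₂) := by
  rw [bicontr, contr, integral_orth_prod]
  refine integral_congr_ae (.of_forall fun u => congrArg₂ _ ?_ ?_)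
  · refine hfs.apply_eq_of_injective (bicontrLeftIdx_injective hp₁ hr₁) fun i => ?_
    simp only [bicontrLeftIdx, bicontrOuterIdx, Function.comp_apply]
    split_ifs <;> first | omega | (congr 1 <;> ext <;>
      simp only [Fin.val_castAdd, Fin.val_natAdd, Fin.val_rev] <;> omega)
  · refine hgs.apply_eq_of_injective (bicontrRightIdx_injective (p := p) hr₂) fun i => ?_
    simp only [bicontrRightIdx, bicontrOuterIdx, Function.comp_apply]
    split_ifs <;> first | omega | (congr 1 <;> ext <;>
      simp only [Fin.val_natAdd, Fin.val_rev] <;> omega)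

end Bicontraction

theorem stmt7 (n₁ m₁ n₂ m₂ p r : ℕ)
    (hp₁ : p ≤ n₁) (hp₂ : p ≤ n₂) (hr₁ : r ≤ m₁) (hr₂ : r ≤ m₂)
    (f : (Fin (n₁ + m₁) → ℝ) → ℂ) (g : (Fin (n₂ + m₂) → ℝ) → ℂ)
    (hfs : FullSym f) (hgs : FullSym g) :
    (∫ t, ‖bicontr p r hp₁ hp₂ hr₁ hr₂ f g t‖^2
        ∂(orth (n₁ + n₂ + m₁ + m₂ - 2*p - 2*r)))
    = ∫ t, ‖contr (p + r) (by omega) (by omega) f g t‖^2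
        ∂(orth ((n₁ + m₁) + (n₂ + m₂) - 2*(p + r))) := by
  simp only [bicontr_eq_contr_comp hp₁ hp₂ hr₁ hr₂ hfs hgs]
  exact integral_orth_comp_equiv (.ofBijective _ (bicontrOuterIdx_bijective hp₁ hp₂ hr₁ hr₂))
    fun t => ‖contr (p + r) _ _ f g t‖ ^ 2

end
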